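/- Let M be an infinite pointed metric space such that PNA(M) \ SNA(M) is non-empty, i.e., there exists a Lipschitz function vanishing at the base point that attains its pointwise norm but does not strongly attain its norm. Then (Lip₀(M) \ SNA(M)) ∪ {0} is not a linear subspace of Lip₀(M): there exist f, g ∈ Lip₀(M) \ SNA(M) such that f − g ∈ SNA(M) and f − g ≠ 0. -/

import Mathlib

open Filter Set
open scoped ZeroAtInfty ENNReal NNReal

/-- The optimal Lipschitz constant (Lipschitz norm) of `f : M → ℝ`. -/
noncomputable def lipNorm {M : Type*} [MetricSpace M] (f : M → ℝ) : ℝ :=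
  sSup {r : ℝ | ∃ p q : M, p ≠ q ∧ r = |f p - f q| / dist p q}

/-- `f` belongs to `Lip₀(M)`: it is Lipschitz and vanishes at the base point. -/
def MemLip0 {M : Type*} [MetricSpace M] (base : M) (f : M → ℝ) : Prop :=
  f base = 0 ∧ ∃ K : ℝ≥0, LipschitzWith K f

/-- `f` strongly attains its (Lipschitz) norm. -/
def StronglyAttains {M : Type*} [MetricSpace M] (f : M → ℝ) : Prop :=
  ∃ p q : M, p ≠ q ∧ |f p - f q| = lipNorm f * dist p q

/-- `f` attains its pointwise norm. -/
def PointwiseAttains {M : Type*} [MetricSpace M] (f : M → ℝ) : Prop :=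
  ∃ p : M, sSup {r : ℝ | ∃ q : M, q ≠ p ∧ r = |f p - f q| / dist p q} = lipNorm f

/-!
Let `f ∈ PNA(M) \ SNA(M)` attain its pointwise norm `L` at `p`. Replacing `f` by `-f` if
necessary, the slopes `(f q - f p) / d(q, p)` come arbitrarily close to `L`. Then
`g := f + d(·, p) - d(0, p)` has norm `L + 1`, since along those slopes both summands are
almost extremal. If `g` attained its norm at `x ≠ y`, the triangle inequality would force `f`
to attain `L` at `x, y`, so `g ∉ SNA(M)`; but `f - g = d(0, p) - d(·, p)` has norm `1`,
attained at `(q, p)`.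
-/

section

variable {M : Type*} [MetricSpace M]

lemma lipNorm_nonneg (f : M → ℝ) : 0 ≤ lipNorm f :=
  Real.sSup_nonneg (by rintro r ⟨p, q, -, rfl⟩; positivity)

lemma lipNorm_le {f : M → ℝ} {K : ℝ} (hK : 0 ≤ K)
    (h : ∀ x y, |f x - f y| ≤ K * dist x y) : lipNorm f ≤ K :=
  Real.sSup_le (fun _ ⟨p, q, _, hr⟩ => hr ▸ div_le_of_le_mul₀ dist_nonneg hK (h p q)) hK

lemma abs_neg_sub_neg (a b : ℝ) : |-a - -b| = |a - b| := by
  rw [neg_sub_neg, abs_sub_comm]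

@[simp]
lemma lipNorm_neg (f : M → ℝ) : lipNorm (-f) = lipNorm f := by
  simp only [lipNorm, Pi.neg_apply, abs_neg_sub_neg]

@[simp]
lemma stronglyAttains_neg_iff {f : M → ℝ} : StronglyAttains (-f) ↔ StronglyAttains f := by
  simp only [StronglyAttains, lipNorm_neg, Pi.neg_apply, abs_neg_sub_neg]

lemma MemLip0.neg {base : M} {f : M → ℝ} (hf : MemLip0 base f) : MemLip0 base (-f) :=
  ⟨by simp [hf.1], hf.2.elim fun K hK => ⟨K, hK.neg⟩⟩

namespace LipschitzWith

variable {f : M → ℝ} {K : ℝ≥0}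

lemma div_dist_le_lipNorm (hf : LipschitzWith K f) {p q : M} (hpq : p ≠ q) :
    |f p - f q| / dist p q ≤ lipNorm f := by
  refine le_csSup ⟨K, ?_⟩ ⟨p, q, hpq, rfl⟩
  rintro r ⟨x, y, -, rfl⟩
  exact div_le_of_le_mul₀ dist_nonneg K.2 (by simpa [Real.dist_eq] using hf.dist_le_mul x y)

lemma abs_sub_le_lipNorm_mul_dist (hf : LipschitzWith K f) (p q : M) :
    |f p - f q| ≤ lipNorm f * dist p q := by
  rcases eq_or_ne p q with rfl | hpq
  · simp
  · exact (div_le_iff₀ (dist_pos.mpr hpq)).mp (hf.div_dist_le_lipNorm hpq)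

end LipschitzWith

def NormApproachedFrom (f : M → ℝ) (p : M) : Prop :=
  ∀ ε > 0, ∃ q ≠ p, lipNorm f - ε < (f q - f p) / dist q p

lemma PointwiseAttains.exists_normApproachedFrom [Nontrivial M] {f : M → ℝ}
    (hf : PointwiseAttains f) : ∃ p, NormApproachedFrom f p ∨ NormApproachedFrom (-f) p := by
  obtain ⟨p, hp⟩ := hf
  refine ⟨p, ?_⟩
  unfold NormApproachedFrom
  by_contra! hfar
  obtain ⟨⟨ε₁, hε₁, hup⟩, ⟨ε₂, hε₂, hdown⟩⟩ := hfar
  have hbound : ∀ q ≠ p, |f p - f q| / dist p q ≤ lipNorm f - min ε₁ ε₂ := by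
    intro q hqp
    have hd : 0 < dist p q := dist_pos.mpr hqp.symm
    have h₁ := hup q hqp
    have h₂ := hdown q hqp
    simp only [lipNorm_neg, Pi.neg_apply, neg_sub_neg] at h₂
    rw [dist_comm, ← neg_sub, neg_div] at h₁
    rw [dist_comm] at h₂
    rw [← abs_of_pos hd, ← abs_div, abs_le]
    constructor <;> linarith [min_le_left ε₁ ε₂, min_le_right ε₁ ε₂]
  obtain ⟨q, hq⟩ := exists_ne p
  have hle : lipNorm f ≤ lipNorm f - min ε₁ ε₂ := calc
    lipNorm f = sSup _ := hp.symm
    _ ≤ _ := csSup_le ⟨_, q, hq, rfl⟩ (by rintro r ⟨q, hqp, rfl⟩; exact hbound q hqp)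
  linarith [lt_min hε₁ hε₂]

lemma abs_sub_add_dist_sub_le (f : M → ℝ) (p : M) (c : ℝ) (x y : M) :
    |(f x + (dist x p - c)) - (f y + (dist y p - c))| ≤ |f x - f y| + dist x y :=
  calc _ = |(f x - f y) + (dist x p - dist y p)| := by ring_nf
    _ ≤ |f x - f y| + |dist x p - dist y p| := abs_add_le _ _
    _ ≤ |f x - f y| + dist x y := by gcongr; exact abs_dist_sub_le x y p

section AddDist

variable {f : M → ℝ} {K : ℝ≥0} {p : M}

lemma lipNorm_add_dist_sub (hf : LipschitzWith K f) (hp : NormApproachedFrom f p) (c : ℝ) :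
    lipNorm (fun x => f x + (dist x p - c)) = lipNorm f + 1 := by
  refine le_antisymm (lipNorm_le (by linarith [lipNorm_nonneg f]) fun x y => ?_) ?_
  · linarith [abs_sub_add_dist_sub_le f p c x y, hf.abs_sub_le_lipNorm_mul_dist x y]
  refine le_of_forall_pos_lt_add fun ε hε => ?_
  obtain ⟨q, hqp, hq⟩ := hp ε hε
  have hd : dist q p ≠ 0 := dist_ne_zero.mpr hqp
  have hg : LipschitzWith (K + (1 + 0)) fun x => f x + (dist x p - c) :=
    hf.add ((LipschitzWith.dist_left p).sub (LipschitzWith.const c))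
  have hslope : (f q - f p) / dist q p + 1 ≤ lipNorm fun x => f x + (dist x p - c) := calc
    (f q - f p) / dist q p + 1 = ((f q + (dist q p - c)) - (f p + (dist p p - c))) / dist q p := by
      field_simp; simp only [dist_self]; ring
    _ ≤ |(f q + (dist q p - c)) - (f p + (dist p p - c))| / dist q p := by
      gcongr; exact le_abs_self _
    _ ≤ _ := hg.div_dist_le_lipNorm hqp
  linarith

lemma not_stronglyAttains_add_dist_sub (hf : LipschitzWith K f) (hp : NormApproachedFrom f p)
    (hns : ¬ StronglyAttains f) (c : ℝ) : ¬ StronglyAttains fun x => f x + (dist x p - c) := by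
  rintro ⟨x, y, hxy, hxy_eq⟩
  rw [lipNorm_add_dist_sub hf hp] at hxy_eq
  refine hns ⟨x, y, hxy, le_antisymm (hf.abs_sub_le_lipNorm_mul_dist x y) ?_⟩
  linarith [abs_sub_add_dist_sub_le f p c x y]

end AddDist

section ConstSubDist

variable [Nontrivial M] (c : ℝ) (p : M)

lemma lipNorm_const_sub_dist : lipNorm (fun x => c - dist x p) = 1 := by
  refine le_antisymm (lipNorm_le zero_le_one fun x y => ?_) ?_
  · rw [sub_sub_sub_cancel_left, one_mul, dist_comm x y]; exact abs_dist_sub_le y x p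
  obtain ⟨q, hqp⟩ := exists_ne p
  have hφ : LipschitzWith (0 + 1) fun x => c - dist x p :=
    (LipschitzWith.const c).sub (LipschitzWith.dist_left p)
  simpa [abs_of_pos (dist_pos.mpr hqp), (dist_pos.mpr hqp).ne'] using hφ.div_dist_le_lipNorm hqp

lemma stronglyAttains_const_sub_dist : StronglyAttains fun x => c - dist x p := by
  obtain ⟨q, hqp⟩ := exists_ne p
  exact ⟨q, p, hqp, by simp [lipNorm_const_sub_dist]⟩

lemma const_sub_dist_ne_zero : (fun x => c - dist x p) ≠ 0 := by
  obtain ⟨q, hqp⟩ := exists_ne p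
  intro h
  have hc : c = 0 := by simpa using congrFun h p
  simpa [hc, hqp] using congrFun h q

end ConstSubDist

lemma exists_not_stronglyAttains_sub_stronglyAttains [Nontrivial M] {base p : M} {f : M → ℝ} (hf : MemLip0 base f) (hns : ¬ StronglyAttains f)
    (hp : NormApproachedFrom f p) :
    ∃ f g : M → ℝ, MemLip0 base f ∧ MemLip0 base g ∧
      ¬ StronglyAttains f ∧ ¬ StronglyAttains g ∧
      StronglyAttains (fun x => f x - g x) ∧ (fun x => f x - g x) ≠ 0 := by
  obtain ⟨hf0, K, hK⟩ := hf
  have hdiff : (fun x => f x - (f x + (dist x p - dist base p))) =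
      fun x => dist base p - dist x p := by
    funext x; ring
  refine ⟨f, fun x => f x + (dist x p - dist base p), ⟨hf0, K, hK⟩,
    ⟨by simp [hf0], _, hK.add ((LipschitzWith.dist_left p).sub (LipschitzWith.const _))⟩, hns,
    not_stronglyAttains_add_dist_sub hK hp hns _, ?_, ?_⟩ <;> rw [hdiff]
  exacts [stronglyAttains_const_sub_dist _ _, const_sub_dist_ne_zero _ _]

end

/-- If `PNA(M) \ SNA(M)` is non-empty, then `(Lip₀(M) \ SNA(M)) ∪ {0}` is not a linear
subspace: there are `f, g ∉ SNA(M)` with `f − g ∈ SNA(M)` and `f − g ≠ 0`. -/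
theorem complement_SNA_not_linear_of_PNA {M : Type*} [MetricSpace M] [Infinite M]
    (base : M)
    (h : ∃ f : M → ℝ, MemLip0 base f ∧ PointwiseAttains f ∧ ¬ StronglyAttains f) :
    ∃ f g : M → ℝ, MemLip0 base f ∧ MemLip0 base g ∧
      ¬ StronglyAttains f ∧ ¬ StronglyAttains g ∧
      StronglyAttains (fun x => f x - g x) ∧ (fun x => f x - g x) ≠ 0 := by
  obtain ⟨f, hf, hpna, hns⟩ := h
  obtain ⟨p, hp | hp⟩ := hpna.exists_normApproachedFrom
  · exact exists_not_stronglyAttains_sub_stronglyAttains hf hns hp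
  · exact exists_not_stronglyAttains_sub_stronglyAttains hf.neg
      (stronglyAttains_neg_iff.not.mpr hns) hp
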